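/- Polyhedral lemma (set identity): Let A be an m×N matrix, b ∈ ℝ^m, γ ∈ ℝ^N, Σ positive definite, c = Σγ(γ^TΣγ)^{-1}, and for y ∈ ℝ^N write r = (I − cγ^T)y. Define V⁻(r) = max over j with (Ac)_j < 0 of (b_j − (Ar)_j)/(Ac)_j, V⁺(r) = min over j with (Ac)_j > 0 of (b_j − (Ar)_j)/(Ac)_j, and V⁰(r) = min over j with (Ac)_j = 0 of (b_j − (Ar)_j). Then {y : Ay ≤ b} = {y : V⁻(r) ≤ γ^T y ≤ V⁺(r) and V⁰(r) ≥ 0}, where a max (resp. min) over an empty set is −∞ (resp. +∞). -/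
import Mathlib


open Matrix

/-- Polyhedral lemma (set identity). With `c = Σγ (γᵀΣγ)⁻¹`
and `r = (I − cγᵀ) y`, the polyhedron `{y : Ay ≤ b}` equals the set of `y`
with `V⁻(r) ≤ γᵀ y ≤ V⁺(r)` and `V⁰(r) ≥ 0`, where
`V⁻(r) = max_{j : (Ac)_j < 0} (b_j − (Ar)_j)/(Ac)_j`,
`V⁺(r) = min_{j : (Ac)_j > 0} (b_j − (Ar)_j)/(Ac)_j`,
`V⁰(r) = min_{j : (Ac)_j = 0} (b_j − (Ar)_j)`, with a max (resp. min) over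
an empty index set equal to −∞ (resp. +∞); equivalently, stated
conjunct-by-conjunct over each index `j`. -/
theorem stmt7 {m N : ℕ} (A : Matrix (Fin m) (Fin N) ℝ) (b : Fin m → ℝ)
    (S : Matrix (Fin N) (Fin N) ℝ) (hS : S.PosDef) (hSsym : S.IsSymm)
    (γ : Fin N → ℝ) (hγ : 0 < γ ⬝ᵥ (S *ᵥ γ))
    (c : Fin N → ℝ) (hc : c = (γ ⬝ᵥ (S *ᵥ γ))⁻¹ • (S *ᵥ γ)) :
    {y : Fin N → ℝ | ∀ j, (A *ᵥ y) j ≤ b j}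
      = {y : Fin N → ℝ |
          (∀ j, (A *ᵥ c) j < 0 →
            (b j - (A *ᵥ (y - (γ ⬝ᵥ y) • c)) j) / (A *ᵥ c) j ≤ γ ⬝ᵥ y) ∧
          (∀ j, 0 < (A *ᵥ c) j →
            γ ⬝ᵥ y ≤ (b j - (A *ᵥ (y - (γ ⬝ᵥ y) • c)) j) / (A *ᵥ c) j) ∧
          (∀ j, (A *ᵥ c) j = 0 →
            0 ≤ b j - (A *ᵥ (y - (γ ⬝ᵥ y) • c)) j)} := by
  ext y
  simp only [Set.mem_setOf_eq]
  have key : ∀ j, (A *ᵥ (y - (γ ⬝ᵥ y) • c)) j = (A *ᵥ y) j - (γ ⬝ᵥ y) * (A *ᵥ c) j := by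
    intro j
    rw [Matrix.mulVec_sub, Matrix.mulVec_smul]
    simp [smul_eq_mul]
  constructor
  · intro h
    refine ⟨fun j hj => ?_, fun j hj => ?_, fun j hj => ?_⟩
    · rw [key j, div_le_iff_of_neg hj]
      have := h j; ring_nf; nlinarith [h j]
    · rw [key j, le_div_iff₀ hj]
      nlinarith [h j]
    · rw [key j, hj]
      nlinarith [h j]
  · rintro ⟨h1, h2, h3⟩ j
    rcases lt_trichotomy ((A *ᵥ c) j) 0 with hj | hj | hj
    · have := h1 j hj
      rw [key j, div_le_iff_of_neg hj] at this
      nlinarith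
    · have := h3 j hj
      rw [key j, hj] at this
      nlinarith
    · have := h2 j hj
      rw [key j, le_div_iff₀ hj] at this
      nlinarith
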